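/- arXiv:1710.03494 — 6 statements merged into one kernel-verified Lean document; each statement's English description precedes it below -/
import Mathlib

section
/- Let f_0 be a probability density on ℝ^d of a random vector Z_0, let G_0 be the continuous CDF of a real random variable symmetric about 0 (so G_0(-t) = 1 - G_0(t) for all t), and let w : ℝ^d → ℝ be measurable such that W = w(Z_0) is symmetric about 0 in distribution. Then f(x) = 2 f_0(x) G_0(w(x)) is a probability density on ℝ^d, i.e. ∫ 2 f_0(x) G_0(w(x)) dx = 1. -/
open MeasureTheory

/- Write `W = w(Z₀)`. Changing variables through the density, `∫ 2 f₀ G₀(w) = 2 E[G₀(W)]`.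
Since `W` and `-W` have the same law, `E[G₀(W)] = E[G₀(-W)] = E[1 - G₀(W)]`, so `E[G₀(W)] = 1/2`. -/

namespace MeasureTheory

theorem integral_withDensity_ofReal_eq_integral_mul {X : Type*} [MeasurableSpace X]
    {μ : Measure X} {f : X → ℝ} (hf : Measurable f) (hf_nonneg : ∀ x, 0 ≤ f x) (g : X → ℝ) :
    ∫ x, g x ∂μ.withDensity (fun x => ENNReal.ofReal (f x)) = ∫ x, f x * g x ∂μ := by
  rw [integral_withDensity_eq_integral_toReal_smul hf.ennreal_ofReal
    (ae_of_all _ fun _ => ENNReal.ofReal_lt_top)]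
  simp_rw [ENNReal.toReal_ofReal (hf_nonneg _), smul_eq_mul]

theorem Measure.isNegInvariant_map_of_map_eq_map_neg {Ω G : Type*} [MeasurableSpace Ω]
    [MeasurableSpace G] [Neg G] [MeasurableNeg G] {P : Measure Ω} {X : Ω → G}
    (hX : Measurable X) (h : P.map X = P.map (fun ω => -X ω)) : (P.map X).IsNegInvariant :=
  ⟨by rw [Measure.neg_def, Measure.map_map measurable_neg hX, h]; rfl⟩

theorem integral_eq_half_of_isNegInvariant {G : Type*} [MeasurableSpace G] [AddGroup G]
    [MeasurableNeg G] {ν : Measure G} [IsProbabilityMeasure ν] [ν.IsNegInvariant] {g : G → ℝ}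
    (hg : Integrable g ν) (hg_neg : ∀ t, g (-t) = 1 - g t) : ∫ t, g t ∂ν = 1 / 2 := by
  have h : ∫ t, g t ∂ν = 1 - ∫ t, g t ∂ν := calc
    ∫ t, g t ∂ν = ∫ t, g (-t) ∂ν := (integral_neg_eq_self g ν).symm
    _ = ∫ t, (1 - g t) ∂ν := by simp_rw [hg_neg]
    _ = 1 - ∫ t, g t ∂ν := by
      rw [integral_sub (integrable_const 1) hg, integral_const, probReal_univ, one_smul]
  linarith

end MeasureTheory

theorem stmt0_general {Ω : Type*} [MeasurableSpace Ω] (P : Measure Ω) [IsProbabilityMeasure P]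
    {d : ℕ} (Z0 : Ω → (Fin d → ℝ)) (hZ0 : Measurable Z0)
    (f0 : (Fin d → ℝ) → ℝ) (hf0m : Measurable f0) (hf0nn : ∀ x, 0 ≤ f0 x)
    (hdens : Measure.map Z0 P = volume.withDensity (fun x => ENNReal.ofReal (f0 x)))
    (G0 : ℝ → ℝ) (hG0mono : Monotone G0)
    (hG0top : Filter.Tendsto G0 Filter.atTop (nhds 1))
    (hG0sym : ∀ t, G0 (-t) = 1 - G0 t)
    (w : (Fin d → ℝ) → ℝ) (hw : Measurable w)
    (hWsym : Measure.map (fun ω => w (Z0 ω)) P = Measure.map (fun ω => -w (Z0 ω)) P) :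
    ∫ x, 2 * f0 x * G0 (w x) = 1 := by
  have hW : Measurable fun ω => w (Z0 ω) := hw.comp hZ0
  have hG0m : Measurable G0 := hG0mono.measurable
  have := Measure.isProbabilityMeasure_map (μ := P) hW.aemeasurable
  have := Measure.isNegInvariant_map_of_map_eq_map_neg hW hWsym
  have hG0_le : ∀ t, G0 t ≤ 1 := hG0mono.ge_of_tendsto hG0top
  have hG0_nonneg : ∀ t, 0 ≤ G0 t := fun t => by linarith [hG0sym t, hG0_le (-t)]
  have hG0_int : Integrable G0 (P.map fun ω => w (Z0 ω)) :=
    .of_bound hG0m.aestronglyMeasurable 1 (ae_of_all _ fun t => by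
      rw [Real.norm_of_nonneg (hG0_nonneg t)]; exact hG0_le t)
  calc ∫ x, 2 * f0 x * G0 (w x)
      = 2 * ∫ x, f0 x * G0 (w x) := by simp_rw [mul_assoc]; exact integral_const_mul _ _
    _ = 2 * ∫ x, G0 (w x) ∂P.map Z0 := by
      rw [hdens, integral_withDensity_ofReal_eq_integral_mul hf0m hf0nn]
    _ = 2 * ∫ t, G0 t ∂P.map fun ω => w (Z0 ω) := by
      rw [integral_map (f := fun x => G0 (w x)) hZ0.aemeasurable
        (hG0m.comp hw).aestronglyMeasurable,
        integral_map hW.aemeasurable hG0m.aestronglyMeasurable]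
    _ = 1 := by rw [integral_eq_half_of_isNegInvariant hG0_int hG0sym]; norm_num

theorem stmt0 {Ω : Type*} [MeasurableSpace Ω] (P : Measure Ω) [IsProbabilityMeasure P]
    {d : ℕ} (Z0 : Ω → (Fin d → ℝ)) (hZ0 : Measurable Z0)
    (f0 : (Fin d → ℝ) → ℝ) (hf0m : Measurable f0) (hf0nn : ∀ x, 0 ≤ f0 x)
    (hdens : Measure.map Z0 P = volume.withDensity (fun x => ENNReal.ofReal (f0 x)))
    (G0 : ℝ → ℝ) (hG0c : Continuous G0) (hG0mono : Monotone G0)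
    (hG0bot : Filter.Tendsto G0 Filter.atBot (nhds 0))
    (hG0top : Filter.Tendsto G0 Filter.atTop (nhds 1))
    (hG0sym : ∀ t, G0 (-t) = 1 - G0 t)
    (w : (Fin d → ℝ) → ℝ) (hw : Measurable w)
    (hWsym : Measure.map (fun ω => w (Z0 ω)) P = Measure.map (fun ω => -w (Z0 ω)) P) :
    ∫ x, 2 * f0 x * G0 (w x) = 1 :=
  stmt0_general P Z0 hZ0 f0 hf0m hf0nn hdens G0 hG0mono hG0top hG0sym w hw hWsym
end

section
/- Let f_0(x, y) be the density of a d-dimensional random vector (X, Y) (X ∈ ℝ^{d-1}, Y ∈ ℝ) such that conditionally on X = x the residual Y - m_Y(x) is symmetric about 0, where m_Y(x) = β_0 + βᵀx. Let G_0 be a continuous CDF with G_0(-t) = 1 - G_0(t), h : ℝ^{d-1} → ℝ measurable, and w_0 : ℝ → ℝ odd measurable. Then f(x,y) = 2 f_0(x,y) G_0( w_0(y - m_Y(x)) h(x) ) is a probability density on ℝ^d. -/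
open MeasureTheory

theorem stmt4 {n : ℕ}
    (f0 : (Fin n → ℝ) × ℝ → ℝ) (hf0m : Measurable f0) (hf0nn : ∀ p, 0 ≤ f0 p)
    (hf0prob : ∫ p, f0 p = 1)
    (β0 : ℝ) (β : Fin n → ℝ)
    (hcondsym : ∀ (x : Fin n → ℝ) (u : ℝ),
      f0 (x, (β0 + ∑ i, β i * x i) + u) = f0 (x, (β0 + ∑ i, β i * x i) - u))
    (G0 : ℝ → ℝ) (hG0c : Continuous G0) (hG0mono : Monotone G0)
    (hG0bot : Filter.Tendsto G0 Filter.atBot (nhds 0))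
    (hG0top : Filter.Tendsto G0 Filter.atTop (nhds 1))
    (hG0sym : ∀ t, G0 (-t) = 1 - G0 t)
    (h : (Fin n → ℝ) → ℝ) (hh : Measurable h)
    (w0 : ℝ → ℝ) (hw0 : Measurable w0) (hw0odd : ∀ u, w0 (-u) = -w0 u) :
    ∫ p : (Fin n → ℝ) × ℝ,
      2 * f0 p * G0 (w0 (p.2 - (β0 + ∑ i, β i * p.1 i)) * h p.1) = 1 := by
  set m : (Fin n → ℝ) → ℝ := fun x => β0 + ∑ i, β i * x i with hm
  have hmm : Measurable m := by
    apply Measurable.add measurable_const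
    exact Finset.measurable_sum _ (fun i _ => (measurable_pi_apply i).const_mul _)
  have hG0le : ∀ t, G0 t ≤ 1 := fun t => hG0mono.ge_of_tendsto hG0top t
  have hG0nn : ∀ t, 0 ≤ G0 t := fun t => hG0mono.le_of_tendsto hG0bot t
  have hf0int : Integrable f0 := by
    by_contra hc
    rw [integral_undef hc] at hf0prob; norm_num at hf0prob
  set F : (Fin n → ℝ) × ℝ → ℝ := fun p => 2 * f0 p * G0 (w0 (p.2 - m p.1) * h p.1) with hF
  have hFm : Measurable F := by
    apply (hf0m.const_mul 2).mul
    exact hG0c.measurable.comp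
      ((hw0.comp (measurable_snd.sub (hmm.comp measurable_fst))).mul (hh.comp measurable_fst))
  have hFint : Integrable F := by
    apply (hf0int.const_mul 2).mono hFm.aestronglyMeasurable
    refine Filter.Eventually.of_forall fun p => ?_
    have h1 : 0 ≤ f0 p := hf0nn p
    have h2 := hG0nn (w0 (p.2 - m p.1) * h p.1)
    have h3 := hG0le (w0 (p.2 - m p.1) * h p.1)
    rw [Real.norm_eq_abs, Real.norm_eq_abs,
      abs_of_nonneg (mul_nonneg (by linarith) h2),
      abs_of_nonneg (by linarith : (0:ℝ) ≤ 2 * f0 p)]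
    nlinarith
  have key : ∀ x y, F (x, 2 * m x - y) = 2 * f0 (x, y) - F (x, y) := by
    intro x y
    have h1 : f0 (x, 2 * m x - y) = f0 (x, y) := by
      have hc := hcondsym x (y - m x)
      have e1 : m x + (y - m x) = y := by ring
      have e2 : m x - (y - m x) = 2 * m x - y := by ring
      rw [e1, e2] at hc
      exact hc.symm
    have h2 : G0 (w0 (2 * m x - y - m x) * h x) = 1 - G0 (w0 (y - m x) * h x) := by
      have e : 2 * m x - y - m x = -(y - m x) := by ring
      rw [e, hw0odd, neg_mul, hG0sym]
    simp only [hF, h1, h2]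
    ring
  have hTeq : (fun p : (Fin n → ℝ) × ℝ => F (p.1, 2 * m p.1 - p.2)) =
      fun p => 2 * f0 p - F p := by
    funext p
    exact key p.1 p.2
  have hTint : Integrable (fun p : (Fin n → ℝ) × ℝ => F (p.1, 2 * m p.1 - p.2)) := by
    rw [hTeq]
    exact (hf0int.const_mul 2).sub hFint
  have hvol : (volume : Measure ((Fin n → ℝ) × ℝ)) =
      (volume : Measure (Fin n → ℝ)).prod (volume : Measure ℝ) := rfl
  have swap : ∫ p : (Fin n → ℝ) × ℝ, F (p.1, 2 * m p.1 - p.2) = ∫ p, F p := by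
    rw [hvol] at hTint hFint ⊢
    rw [integral_prod _ hTint, integral_prod _ hFint]
    congr 1
    funext x
    exact integral_sub_left_eq_self (fun y => F (x, y)) volume (2 * m x)
  have sum : (∫ p, F p) + (∫ p, F p) = 2 := by
    nth_rewrite 2 [← swap]
    rw [← integral_add hFint hTint]
    have : (fun p : (Fin n → ℝ) × ℝ => F p + F (p.1, 2 * m p.1 - p.2)) =
        fun p => 2 * f0 p := by
      funext p
      rw [key p.1 p.2]; ring
    rw [this, integral_const_mul, hf0prob]
    norm_num
  show ∫ p, F p = 1
  linarith
end

section
/- Let Z be a real random variable with density symmetric about 0 (f_Z(-z) = f_Z(z)), and let G be a continuous CDF on ℝ with G(-t) = 1 - G(t). Then for every real constant c, E[2 G(cZ)] = ∫ 2 f_Z(z) G(cz) dz = 1. -/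
open MeasureTheory

theorem stmt6 (fZ : ℝ → ℝ) (hfm : Measurable fZ) (hfnn : ∀ z, 0 ≤ fZ z)
    (hfeven : ∀ z, fZ (-z) = fZ z) (hfprob : ∫ z, fZ z = 1)
    (G : ℝ → ℝ) (hGc : Continuous G) (hGmono : Monotone G)
    (hGbot : Filter.Tendsto G Filter.atBot (nhds 0))
    (hGtop : Filter.Tendsto G Filter.atTop (nhds 1))
    (hGsym : ∀ t, G (-t) = 1 - G t)
    (c : ℝ) :
    ∫ z, 2 * fZ z * G (c * z) = 1 := by
  -- fZ is integrable since its integral is 1 ≠ 0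
  have hfint : Integrable fZ := by
    by_contra h
    rw [integral_undef h] at hfprob
    norm_num at hfprob
  -- G bounds
  have hG0 : ∀ t, 0 ≤ G t := fun t => hGmono.le_of_tendsto hGbot t
  have hG1 : ∀ t, G t ≤ 1 := fun t => hGmono.ge_of_tendsto hGtop t
  -- integrability of the integrand
  have hint : Integrable (fun z => 2 * fZ z * G (c * z)) := by
    apply Integrable.mono (hfint.const_mul 2)
    · exact ((hfm.const_mul 2).mul (hGc.measurable.comp (measurable_const_mul c))).aestronglyMeasurable
    · filter_upwards with z
      simp only [norm_mul, Real.norm_eq_abs]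
      have h1 : |G (c * z)| ≤ 1 := abs_le.2 ⟨by linarith [hG0 (c*z)], hG1 _⟩
      calc |2| * |fZ z| * |G (c * z)| ≤ |2| * |fZ z| * 1 :=
            mul_le_mul_of_nonneg_left h1 (by positivity)
        _ = |2| * |fZ z| := mul_one _
  have hneg : ∫ z, 2 * fZ z * G (c * z) = ∫ z, 2 * fZ z * (1 - G (c * z)) := by
    rw [← integral_neg_eq_self (fun z => 2 * fZ z * G (c * z))]
    congr 1
    funext z
    rw [show c * -z = -(c * z) by ring, hfeven, hGsym]
  have hsub : ∫ z, 2 * fZ z * (1 - G (c * z)) =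
      (∫ z, 2 * fZ z) - ∫ z, 2 * fZ z * G (c * z) := by
    rw [← integral_sub (hfint.const_mul 2) hint]
    congr 1; funext z; ring
  have h2 : ∫ z, 2 * fZ z = 2 := by
    rw [integral_const_mul, hfprob]; norm_num
  rw [h2] at hsub
  linarith [hneg.trans hsub]
end

section
/- Let (X, Y) have density f(x,y) = 2 φ_2(x, y; ρ) Φ((y - ρx) h(x)) on ℝ², with |ρ| < 1, φ_2 the standard bivariate normal density with correlation ρ, Φ the standard normal CDF, and h measurable such that the relevant integrals exist. Then E[Y] = √(2/π) (1 - ρ²) ∫_ℝ h(x) / √(1 + (1-ρ²)h(x)²) · φ(x) dx, where φ is the standard normal density. -/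
/-!
Disintegrate along `x`. Shearing `y = ρ x + σ u` with `σ = √(1 - ρ²)` factors the density as
`2 φ(x) φ(u) Φ(c u) / σ` with `c = σ h(x)`, so the inner integral over `y` is
`2 φ(x) (ρ x ∫ φ(u) Φ(c u) du + σ ∫ u φ(u) Φ(c u) du)`. The symmetry `u ↦ -u` gives
`∫ φ(u) Φ(c u) du = 1/2`, and since `φ(u) φ(c u) = φ(s u) / √(2π)` with `s = √(1 + c²)`, the
function `c Φ(s u) / (√(2π) s) - φ(u) Φ(c u)` is an antiderivative of `u φ(u) Φ(c u)`, whence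
`∫ u φ(u) Φ(c u) du = c / √(2π (1 + c²))`. Finally the term `ρ x φ(x)` integrates to `0`.
-/

open MeasureTheory

noncomputable def stdNormalPDF (x : ℝ) : ℝ :=
  (Real.sqrt (2 * Real.pi))⁻¹ * Real.exp (-x ^ 2 / 2)

noncomputable def stdNormalCDF (t : ℝ) : ℝ :=
  ∫ u in Set.Iic t, stdNormalPDF u

/-- Standard bivariate normal density with correlation ρ. -/
noncomputable def biNormalPDF (ρ : ℝ) (p : ℝ × ℝ) : ℝ :=
  (2 * Real.pi * Real.sqrt (1 - ρ ^ 2))⁻¹ *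
    Real.exp (-(p.1 ^ 2 - 2 * ρ * p.1 * p.2 + p.2 ^ 2) / (2 * (1 - ρ ^ 2)))

open Real Set Filter Topology

lemma stdNormalPDF_eq_exp_neg_mul_sq (x : ℝ) :
    stdNormalPDF x = (√(2 * π))⁻¹ * exp (-(1 / 2) * x ^ 2) := by
  rw [stdNormalPDF]; ring_nf

lemma stdNormalPDF_nonneg (x : ℝ) : 0 ≤ stdNormalPDF x := by
  rw [stdNormalPDF]; positivity

lemma continuous_stdNormalPDF : Continuous stdNormalPDF := by
  unfold stdNormalPDF; fun_prop

lemma stdNormalPDF_neg (x : ℝ) : stdNormalPDF (-x) = stdNormalPDF x := by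
  simp only [stdNormalPDF, neg_sq]

lemma stdNormalPDF_mul_stdNormalPDF (x y : ℝ) :
    stdNormalPDF x * stdNormalPDF y = (2 * π)⁻¹ * exp (-(x ^ 2 + y ^ 2) / 2) := by
  have h2π : (√(2 * π))⁻¹ * (√(2 * π))⁻¹ = (2 * π)⁻¹ := by
    rw [← mul_inv, mul_self_sqrt (by positivity)]
  rw [stdNormalPDF, stdNormalPDF, mul_mul_mul_comm, h2π, ← exp_add]
  ring_nf

lemma integrable_stdNormalPDF : Integrable stdNormalPDF := by
  simp_rw [funext stdNormalPDF_eq_exp_neg_mul_sq]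
  exact (integrable_exp_neg_mul_sq (by norm_num)).const_mul _

lemma integral_stdNormalPDF : ∫ x, stdNormalPDF x = 1 := by
  simp_rw [stdNormalPDF_eq_exp_neg_mul_sq, integral_const_mul, integral_gaussian,
    show π / (1 / 2) = 2 * π by ring]
  exact inv_mul_cancel₀ (by positivity)

lemma integrable_id_mul_stdNormalPDF : Integrable fun x => x * stdNormalPDF x := by
  have h := integrable_rpow_mul_exp_neg_mul_sq (b := 1 / 2) (by norm_num) (s := 1) (by norm_num)
  simp_rw [rpow_one] at h
  simpa only [stdNormalPDF_eq_exp_neg_mul_sq, mul_left_comm] using h.const_mul (√(2 * π))⁻¹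

lemma hasDerivAt_stdNormalPDF (x : ℝ) : HasDerivAt stdNormalPDF (-x * stdNormalPDF x) x := by
  have h : HasDerivAt (fun y : ℝ => -y ^ 2 / 2) (-x) x :=
    (hasDerivAt_pow 2 x).fun_neg.div_const 2 |>.congr_deriv (by push_cast; ring)
  exact (h.exp.const_mul (√(2 * π))⁻¹).congr_deriv (by rw [stdNormalPDF]; ring)

lemma tendsto_stdNormalPDF_atTop : Tendsto stdNormalPDF atTop (𝓝 0) := by
  unfold stdNormalPDF
  have h : Tendsto (fun x : ℝ => -x ^ 2 / 2) atTop atBot :=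
    (tendsto_neg_atTop_atBot.comp (tendsto_pow_atTop two_ne_zero)).atBot_div_const two_pos
  simpa [Function.comp_def] using (tendsto_exp_atBot.comp h).const_mul (√(2 * π))⁻¹

lemma tendsto_stdNormalPDF_atBot : Tendsto stdNormalPDF atBot (𝓝 0) := by
  simpa only [Function.comp_def, stdNormalPDF_neg] using
    tendsto_stdNormalPDF_atTop.comp tendsto_neg_atBot_atTop

lemma integral_id_mul_stdNormalPDF : ∫ x, x * stdNormalPDF x = 0 := by
  have h := integral_of_hasDerivAt_of_tendsto
    (fun x => ((hasDerivAt_stdNormalPDF x).neg).congr_deriv (by ring))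
    integrable_id_mul_stdNormalPDF tendsto_stdNormalPDF_atBot.neg tendsto_stdNormalPDF_atTop.neg
  simpa using h

lemma stdNormalCDF_eq_add_intervalIntegral (t : ℝ) :
    stdNormalCDF t = stdNormalCDF 0 + ∫ u in (0 : ℝ)..t, stdNormalPDF u := by
  rw [stdNormalCDF, stdNormalCDF, intervalIntegral.integral_Iic_sub_Iic
    integrable_stdNormalPDF.integrableOn integrable_stdNormalPDF.integrableOn |>.symm]
  ring

lemma hasDerivAt_stdNormalCDF (t : ℝ) : HasDerivAt stdNormalCDF (stdNormalPDF t) t := by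
  rw [funext stdNormalCDF_eq_add_intervalIntegral]
  exact (intervalIntegral.integral_hasDerivAt_right integrable_stdNormalPDF.intervalIntegrable
    (continuous_stdNormalPDF.stronglyMeasurableAtFilter _ _)
    continuous_stdNormalPDF.continuousAt).const_add _

lemma continuous_stdNormalCDF : Continuous stdNormalCDF :=
  continuous_iff_continuousAt.2 fun t => (hasDerivAt_stdNormalCDF t).continuousAt

lemma stdNormalCDF_nonneg (t : ℝ) : 0 ≤ stdNormalCDF t :=
  setIntegral_nonneg measurableSet_Iic fun x _ => stdNormalPDF_nonneg x

lemma stdNormalCDF_le_one (t : ℝ) : stdNormalCDF t ≤ 1 :=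
  integral_stdNormalPDF ▸ setIntegral_le_integral integrable_stdNormalPDF
    (.of_forall stdNormalPDF_nonneg)

lemma stdNormalCDF_add_integral_Ioi (t : ℝ) :
    stdNormalCDF t + ∫ u in Ioi t, stdNormalPDF u = 1 :=
  integral_stdNormalPDF ▸ intervalIntegral.integral_Iic_add_Ioi
    integrable_stdNormalPDF.integrableOn integrable_stdNormalPDF.integrableOn

lemma stdNormalCDF_neg (t : ℝ) : stdNormalCDF (-t) = 1 - stdNormalCDF t := by
  have h : stdNormalCDF (-t) = ∫ u in Ioi t, stdNormalPDF u := by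
    rw [stdNormalCDF, ← integral_comp_neg_Ioi]
    simp only [stdNormalPDF_neg]
  linarith [stdNormalCDF_add_integral_Ioi t]

lemma tendsto_stdNormalCDF_atTop : Tendsto stdNormalCDF atTop (𝓝 1) := by
  have h := (intervalIntegral_tendsto_integral_Ioi 0 integrable_stdNormalPDF.integrableOn
    tendsto_id).const_add (stdNormalCDF 0)
  rw [stdNormalCDF_add_integral_Ioi] at h
  exact h.congr fun t => (stdNormalCDF_eq_add_intervalIntegral t).symm

lemma tendsto_stdNormalCDF_atBot : Tendsto stdNormalCDF atBot (𝓝 0) := by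
  have h := (tendsto_stdNormalCDF_atTop.comp tendsto_neg_atBot_atTop).const_sub 1
  simpa [Function.comp_def, stdNormalCDF_neg] using h

lemma norm_stdNormalCDF_le_one (t : ℝ) : ‖stdNormalCDF t‖ ≤ 1 := by
  rw [norm_of_nonneg (stdNormalCDF_nonneg t)]
  exact stdNormalCDF_le_one t

lemma MeasureTheory.Integrable.mul_stdNormalCDF_comp {α : Type*} [MeasurableSpace α]
    {μ : Measure α} {f k : α → ℝ} (hf : Integrable f μ) (hk : Measurable k) :
    Integrable (fun a => f a * stdNormalCDF (k a)) μ :=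
  hf.mul_bdd (continuous_stdNormalCDF.measurable.comp hk).aestronglyMeasurable
    (.of_forall fun a => norm_stdNormalCDF_le_one (k a))

lemma Filter.Tendsto.mul_stdNormalCDF_comp {α : Type*} {l : Filter α} {f k : α → ℝ}
    (hf : Tendsto f l (𝓝 0)) : Tendsto (fun a => f a * stdNormalCDF (k a)) l (𝓝 0) :=
  hf.zero_mul_isBoundedUnder_le (isBoundedUnder_of ⟨1, fun a => norm_stdNormalCDF_le_one (k a)⟩)

lemma integral_stdNormalPDF_mul_stdNormalCDF_const_mul (c : ℝ) :
    ∫ u, stdNormalPDF u * stdNormalCDF (c * u) = 1 / 2 := by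
  have hint := integrable_stdNormalPDF.mul_stdNormalCDF_comp (measurable_const_mul c)
  have hsymm : ∫ u, stdNormalPDF u * stdNormalCDF (c * u)
      = 1 - ∫ u, stdNormalPDF u * stdNormalCDF (c * u) := calc
    _ = ∫ u, stdNormalPDF (-u) * stdNormalCDF (c * -u) := (integral_neg_eq_self _ _).symm
    _ = ∫ u, (stdNormalPDF u - stdNormalPDF u * stdNormalCDF (c * u)) := by
      simp only [stdNormalPDF_neg, mul_neg, stdNormalCDF_neg, mul_one_sub]
    _ = 1 - ∫ u, stdNormalPDF u * stdNormalCDF (c * u) := by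
      rw [integral_sub integrable_stdNormalPDF hint, integral_stdNormalPDF]
  linarith

lemma integral_id_mul_stdNormalPDF_mul_stdNormalCDF_const_mul (c : ℝ) :
    ∫ u, u * stdNormalPDF u * stdNormalCDF (c * u) = c / (√(2 * π) * √(1 + c ^ 2)) := by
  set s := √(1 + c ^ 2)
  have hs : 0 < s := sqrt_pos.2 (by positivity)
  have hs2 : s ^ 2 = 1 + c ^ 2 := sq_sqrt (by positivity)
  have hF : ∀ u, HasDerivAt
      (fun v => c / (√(2 * π) * s) * stdNormalCDF (s * v)
        - stdNormalPDF v * stdNormalCDF (c * v))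
      (u * stdNormalPDF u * stdNormalCDF (c * u)) u := by
    intro u
    have hCs := (hasDerivAt_stdNormalCDF (s * u)).comp u ((hasDerivAt_id u).const_mul s)
    have hCc := (hasDerivAt_stdNormalCDF (c * u)).comp u ((hasDerivAt_id u).const_mul c)
    refine ((hCs.const_mul _).sub ((hasDerivAt_stdNormalPDF u).mul hCc)).congr_deriv ?_
    have hgauss : c / (√(2 * π) * s) * (stdNormalPDF (s * u) * s)
        = stdNormalPDF u * stdNormalPDF (c * u) * c := by
      rw [stdNormalPDF_mul_stdNormalPDF, stdNormalPDF, mul_pow, hs2]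
      field_simp
      rw [sq_sqrt (by positivity)]
      ring_nf
    simp only [mul_one, Function.comp_apply]
    linear_combination hgauss
  have h := integral_of_hasDerivAt_of_tendsto hF
    (integrable_id_mul_stdNormalPDF.mul_stdNormalCDF_comp (measurable_const_mul c))
    ((tendsto_stdNormalCDF_atBot.comp (tendsto_id.const_mul_atBot hs)).const_mul _ |>.sub
      tendsto_stdNormalPDF_atBot.mul_stdNormalCDF_comp)
    ((tendsto_stdNormalCDF_atTop.comp (tendsto_id.const_mul_atTop hs)).const_mul _ |>.sub
      tendsto_stdNormalPDF_atTop.mul_stdNormalCDF_comp)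
  simpa using h

lemma integral_eq_smul_integral_comp_add_mul {E : Type*} [NormedAddCommGroup E]
    [NormedSpace ℝ E] (f : ℝ → E) (a : ℝ) {σ : ℝ} (hσ : 0 < σ) :
    ∫ y, f y = σ • ∫ u, f (a + σ * u) := by
  rw [Measure.integral_comp_mul_left (fun y => f (a + y)), integral_add_left_eq_self,
    abs_of_pos (inv_pos.2 hσ), smul_inv_smul₀ hσ.ne']

lemma one_sub_sq_pos_of_abs_lt_one {ρ : ℝ} (hρ : |ρ| < 1) : 0 < 1 - ρ ^ 2 := by
  nlinarith [abs_nonneg ρ, sq_abs ρ]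

lemma biNormalPDF_shear {ρ : ℝ} (hρ : |ρ| < 1) (x u : ℝ) :
    biNormalPDF ρ (x, ρ * x + √(1 - ρ ^ 2) * u)
      = stdNormalPDF x * stdNormalPDF u / √(1 - ρ ^ 2) := by
  have h1 := one_sub_sq_pos_of_abs_lt_one hρ
  have hσ2 : √(1 - ρ ^ 2) ^ 2 = 1 - ρ ^ 2 := sq_sqrt h1.le
  have hexp : -(x ^ 2 - 2 * ρ * x * (ρ * x + √(1 - ρ ^ 2) * u)
      + (ρ * x + √(1 - ρ ^ 2) * u) ^ 2) / (2 * (1 - ρ ^ 2)) = -(x ^ 2 + u ^ 2) / 2 := by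
    field_simp
    linear_combination (-u ^ 2) * hσ2
  rw [biNormalPDF, hexp, stdNormalPDF_mul_stdNormalPDF, mul_inv]
  ring

lemma integral_mul_biNormalPDF_mul_stdNormalCDF {ρ : ℝ} (hρ : |ρ| < 1) (x k : ℝ) :
    ∫ y, y * (2 * biNormalPDF ρ (x, y) * stdNormalCDF ((y - ρ * x) * k))
      = (ρ * x + √(2 / π) * (1 - ρ ^ 2) * (k / √(1 + (1 - ρ ^ 2) * k ^ 2)))
        * stdNormalPDF x := by
  have h1 := one_sub_sq_pos_of_abs_lt_one hρ
  set σ := √(1 - ρ ^ 2)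
  have hσ : 0 < σ := sqrt_pos.2 h1
  have hσ2 : σ ^ 2 = 1 - ρ ^ 2 := sq_sqrt h1.le
  have hshear : ∀ u, (ρ * x + σ * u) * (2 * biNormalPDF ρ (x, ρ * x + σ * u)
      * stdNormalCDF ((ρ * x + σ * u - ρ * x) * k))
      = (2 * ρ * x * stdNormalPDF x / σ) * (stdNormalPDF u * stdNormalCDF (σ * k * u))
        + 2 * stdNormalPDF x * (u * stdNormalPDF u * stdNormalCDF (σ * k * u)) := by
    intro u
    rw [biNormalPDF_shear hρ, show (ρ * x + σ * u - ρ * x) * k = σ * k * u by ring]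
    field_simp
    ring
  have hint := integrable_stdNormalPDF.mul_stdNormalCDF_comp (measurable_const_mul (σ * k))
  have hint' :=
    integrable_id_mul_stdNormalPDF.mul_stdNormalCDF_comp (measurable_const_mul (σ * k))
  rw [integral_eq_smul_integral_comp_add_mul _ (ρ * x) hσ, smul_eq_mul]
  simp_rw [hshear]
  rw [integral_add (hint.const_mul _) (hint'.const_mul _), integral_const_mul, integral_const_mul,
    integral_stdNormalPDF_mul_stdNormalCDF_const_mul,
    integral_id_mul_stdNormalPDF_mul_stdNormalCDF_const_mul, mul_pow, hσ2]
  have h2π : √(2 / π) = 2 / √(2 * π) := by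
    rw [eq_div_iff (by positivity), ← sqrt_mul (by positivity),
      show 2 / π * (2 * π) = 2 ^ 2 by field_simp, sqrt_sq zero_le_two]
  rw [h2π, ← hσ2]
  field_simp

theorem stmt9_general (ρ : ℝ) (hρ : |ρ| < 1) (h : ℝ → ℝ)
    (hint : Integrable (fun p : ℝ × ℝ =>
      p.2 * (2 * biNormalPDF ρ p * stdNormalCDF ((p.2 - ρ * p.1) * h p.1)))) :
    ∫ p : ℝ × ℝ, p.2 * (2 * biNormalPDF ρ p * stdNormalCDF ((p.2 - ρ * p.1) * h p.1))
      = Real.sqrt (2 / Real.pi) * (1 - ρ ^ 2) *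
        ∫ x : ℝ, h x / Real.sqrt (1 + (1 - ρ ^ 2) * h x ^ 2) * stdNormalPDF x := by
  set g := fun x => h x / √(1 + (1 - ρ ^ 2) * h x ^ 2) * stdNormalPDF x
  have hinner : ∀ x, ∫ y, y * (2 * biNormalPDF ρ (x, y) * stdNormalCDF ((y - ρ * x) * h x))
      = ρ * (x * stdNormalPDF x) + √(2 / π) * (1 - ρ ^ 2) * g x := fun x => by
    rw [integral_mul_biNormalPDF_mul_stdNormalCDF hρ]; ring
  rw [Measure.volume_eq_prod] at hint ⊢
  have hmarg := hint.integral_prod_left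
  simp_rw [integral_prod _ hint, hinner] at hmarg ⊢
  have hlin := integrable_id_mul_stdNormalPDF.const_mul ρ
  have hrest := (hmarg.sub hlin).congr (.of_forall fun x => add_sub_cancel_left _ _)
  rw [integral_add hlin hrest, integral_const_mul,
    integral_id_mul_stdNormalPDF, mul_zero, zero_add, integral_const_mul]

theorem stmt9 (ρ : ℝ) (hρ : |ρ| < 1) (h : ℝ → ℝ) (hh : Measurable h)
    (hint : Integrable (fun p : ℝ × ℝ =>
      p.2 * (2 * biNormalPDF ρ p * stdNormalCDF ((p.2 - ρ * p.1) * h p.1)))) :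
    ∫ p : ℝ × ℝ, p.2 * (2 * biNormalPDF ρ p * stdNormalCDF ((p.2 - ρ * p.1) * h p.1))
      = Real.sqrt (2 / Real.pi) * (1 - ρ ^ 2) *
        ∫ x : ℝ, h x / Real.sqrt (1 + (1 - ρ ^ 2) * h x ^ 2) * stdNormalPDF x :=
  stmt9_general ρ hρ h hint
end

section
/- Let (X, Y) have density f(x,y) = 2 φ_2(x, y; ρ) Φ((y - ρx) h(x)) with |ρ| < 1 and h an odd measurable function (h(-x) = -h(x)). Then E[Y] = 0. -/
open MeasureTheory

theorem stmt11 (ρ : ℝ) (hρ : |ρ| < 1) (h : ℝ → ℝ) (hh : Measurable h)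
    (hodd : ∀ x, h (-x) = -h x)
    (hint : Integrable (fun p : ℝ × ℝ =>
      p.2 * (2 * biNormalPDF ρ p * stdNormalCDF ((p.2 - ρ * p.1) * h p.1)))) :
    ∫ p : ℝ × ℝ, p.2 * (2 * biNormalPDF ρ p * stdNormalCDF ((p.2 - ρ * p.1) * h p.1))
      = 0 := by
  set f : ℝ × ℝ → ℝ := fun p =>
    p.2 * (2 * biNormalPDF ρ p * stdNormalCDF ((p.2 - ρ * p.1) * h p.1)) with hf
  have hneg : ∀ p : ℝ × ℝ, f (-p) = - f p := by
    intro p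
    have h1 : biNormalPDF ρ (-p) = biNormalPDF ρ p := by
      simp only [biNormalPDF, Prod.fst_neg, Prod.snd_neg]
      ring_nf
    have h2 : ((-p).2 - ρ * (-p).1) * h (-p).1 = (p.2 - ρ * p.1) * h p.1 := by
      simp only [Prod.fst_neg, Prod.snd_neg, hodd]
      ring
    simp only [hf]
    rw [h2, h1, Prod.snd_neg]
    ring
  have key : ∫ p : ℝ × ℝ, f (-p) = ∫ p : ℝ × ℝ, f p :=
    integral_neg_eq_self f (volume : Measure (ℝ × ℝ))
  have key2 : ∫ p : ℝ × ℝ, f (-p) = - ∫ p : ℝ × ℝ, f p := by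
    simp only [hneg]
    exact integral_neg f
  linarith
end

section
/- Let f_0 be the density of (X, Y) ∈ ℝ^{d-m} × ℝ^m such that conditionally on X = x the residual Y - (β_0 + βᵀx) is centrally symmetric in ℝ^m, let G_0 be a continuous CDF with G_0(-t) = 1 - G_0(t), let w_0 : ℝ^m → ℝ be odd measurable and h : ℝ^{d-m} → ℝ measurable. Then f(x, y) = 2 f_0(x, y) G_0( w_0(y - β_0 - βᵀx) h(x) ) is a probability density on ℝ^d. -/
/-!
The reflection `y ↦ 2 m_Y(x) - y` in the fibre over `x` preserves Lebesgue measure and `f₀`, and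
changes the sign of `w₀(y - m_Y(x)) h(x)`. Since `G₀(-t) = 1 - G₀(t)`, it carries
`∫ f₀ G₀(w)` onto `∫ f₀ (1 - G₀(w))`, so twice the former integral is `∫ f₀ = 1`.
-/

open MeasureTheory Set

theorem MeasureTheory.measurePreserving_prod_sub_left {α β : Type*} [MeasurableSpace α]
    [MeasurableSpace β] [AddGroup β] [MeasurableAdd₂ β] [MeasurableNeg β]
    (μ : Measure α) (ν : Measure β) [SFinite μ] [SFinite ν] [ν.IsAddLeftInvariant]
    [ν.IsNegInvariant] {c : α → β} (hc : Measurable c) :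
    MeasurePreserving (fun p : α × β => (p.1, c p.1 - p.2)) (μ.prod ν) (μ.prod ν) :=
  (MeasurePreserving.id μ).skew_product (hc.comp measurable_fst |>.sub measurable_snd)
    (ae_of_all _ fun x => Measure.map_sub_left_eq_self ν (c x))

theorem integral_two_mul_mul_comp_eq_integral_of_reflection {α : Type*} [MeasurableSpace α]
    {μ : Measure α} {f w : α → ℝ} {G : ℝ → ℝ} {σ : α → α} (hσ : MeasurePreserving σ μ μ)
    (hfσ : ∀ a, f (σ a) = f a) (hwσ : ∀ a, w (σ a) = -w a)
    (hf : Integrable f μ) (hw : AEMeasurable w μ)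
    (hGm : Measurable G) (hG : ∀ t, G t ∈ Icc (0 : ℝ) 1) (hGsymm : ∀ t, G (-t) = 1 - G t) :
    ∫ a, 2 * f a * G (w a) ∂μ = ∫ a, f a ∂μ := by
  have hint : Integrable (fun a => f a * G (w a)) μ :=
    hf.mul_bdd (hGm.comp_aemeasurable hw).aestronglyMeasurable <| ae_of_all _ fun a => by
      rw [Real.norm_of_nonneg (hG _).1]
      exact (hG _).2
  have hreflect : ∫ a, f a * G (w a) ∂μ = ∫ a, f a ∂μ - ∫ a, f a * G (w a) ∂μ :=
    calc ∫ a, f a * G (w a) ∂μ = ∫ a, f (σ a) * G (w (σ a)) ∂μ := by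
          have := integral_map (f := fun a => f a * G (w a)) hσ.aemeasurable
            (by rw [hσ.map_eq]; exact hint.aestronglyMeasurable)
          rwa [hσ.map_eq] at this
      _ = ∫ a, (f a - f a * G (w a)) ∂μ := by simp only [hfσ, hwσ, hGsymm, mul_sub, mul_one]
      _ = _ := integral_sub hf hint
  simp only [mul_assoc, integral_const_mul]
  linarith

theorem stmt17_general {k m : ℕ}
    (f0 : (Fin k → ℝ) × (Fin m → ℝ) → ℝ)
    (hf0prob : ∫ p, f0 p = 1)
    (β0 : Fin m → ℝ) (β : Fin k → Fin m → ℝ)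
    (hcondsym : ∀ (x : Fin k → ℝ) (u : Fin m → ℝ),
      f0 (x, (fun j => β0 j + ∑ i, β i j * x i) + u)
        = f0 (x, (fun j => β0 j + ∑ i, β i j * x i) - u))
    (G0 : ℝ → ℝ) (hG0c : Continuous G0) (hG0mono : Monotone G0)
    (hG0bot : Filter.Tendsto G0 Filter.atBot (nhds 0))
    (hG0top : Filter.Tendsto G0 Filter.atTop (nhds 1))
    (hG0sym : ∀ t, G0 (-t) = 1 - G0 t)
    (w0 : (Fin m → ℝ) → ℝ) (hw0 : Measurable w0) (hw0odd : ∀ u, w0 (-u) = -w0 u)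
    (h : (Fin k → ℝ) → ℝ) (hh : Measurable h) :
    ∫ p : (Fin k → ℝ) × (Fin m → ℝ),
      2 * f0 p * G0 (w0 (p.2 - fun j => β0 j + ∑ i, β i j * p.1 i) * h p.1) = 1 := by
  let mY : (Fin k → ℝ) → (Fin m → ℝ) := fun x j => β0 j + ∑ i, β i j * x i
  have hmY : Measurable mY := by fun_prop
  have hsymm : ∀ x u, f0 (x, mY x + u) = f0 (x, mY x - u) := hcondsym
  have hσ := measurePreserving_prod_sub_left volume volume (hmY.add hmY)
  rw [← Measure.volume_eq_prod] at hσ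
  refine (integral_two_mul_mul_comp_eq_integral_of_reflection hσ (fun p => ?_) (fun p => ?_)
    (integrable_of_integral_eq_one hf0prob) (by fun_prop) hG0c.measurable
    (fun t => ⟨hG0mono.le_of_tendsto hG0bot t, hG0mono.ge_of_tendsto hG0top t⟩) hG0sym).trans
    hf0prob
  · simpa [sub_sub_eq_add_sub, add_sub_cancel] using (hsymm p.1 (p.2 - mY p.1)).symm
  · change w0 (mY p.1 + mY p.1 - p.2 - mY p.1) * h p.1 = -(w0 (p.2 - mY p.1) * h p.1)
    rw [← neg_mul, ← hw0odd]
    congr 2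
    abel

theorem stmt17 {k m : ℕ}
    (f0 : (Fin k → ℝ) × (Fin m → ℝ) → ℝ) (hf0m : Measurable f0) (hf0nn : ∀ p, 0 ≤ f0 p)
    (hf0prob : ∫ p, f0 p = 1)
    (β0 : Fin m → ℝ) (β : Fin k → Fin m → ℝ)
    (hcondsym : ∀ (x : Fin k → ℝ) (u : Fin m → ℝ),
      f0 (x, (fun j => β0 j + ∑ i, β i j * x i) + u)
        = f0 (x, (fun j => β0 j + ∑ i, β i j * x i) - u))
    (G0 : ℝ → ℝ) (hG0c : Continuous G0) (hG0mono : Monotone G0)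
    (hG0bot : Filter.Tendsto G0 Filter.atBot (nhds 0))
    (hG0top : Filter.Tendsto G0 Filter.atTop (nhds 1))
    (hG0sym : ∀ t, G0 (-t) = 1 - G0 t)
    (w0 : (Fin m → ℝ) → ℝ) (hw0 : Measurable w0) (hw0odd : ∀ u, w0 (-u) = -w0 u)
    (h : (Fin k → ℝ) → ℝ) (hh : Measurable h) :
    ∫ p : (Fin k → ℝ) × (Fin m → ℝ),
      2 * f0 p * G0 (w0 (p.2 - fun j => β0 j + ∑ i, β i j * p.1 i) * h p.1) = 1 :=
  stmt17_general f0 hf0prob β0 β hcondsym G0 hG0c hG0mono hG0bot hG0top hG0sym w0 hw0 hw0odd h hh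
end
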